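/- In the US legislative game, for every k with c_p(k) ≠ 0, c_p(k) > c_s(k). -/

import Mathlib

/-- The players of the US legislative game: the president, the vice president,
100 senators, and 435 representatives. -/
inductive USPlayer where
  | pres : USPlayer
  | vp : USPlayer
  | sen : Fin 100 → USPlayer
  | rep : Fin 435 → USPlayer
  deriving DecidableEq

/-- Whether a player is a senator. -/
def USPlayer.isSen : USPlayer → Bool
  | .sen _ => true
  | _ => false

/-- Whether a player is a representative. -/
def USPlayer.isRep : USPlayer → Bool
  | .rep _ => true
  | _ => false

/-- The number of senators in a coalition. -/
def numSen (S : Finset USPlayer) : ℕ := (S.filter (fun p => p.isSen)).card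

/-- The number of representatives in a coalition. -/
def numRep (S : Finset USPlayer) : ℕ := (S.filter (fun p => p.isRep)).card

/-- A coalition is winning in the US legislative game iff either the president is in it
together with at least 218 representatives and either at least 51 senators or the vice
president and at least 50 senators; or it contains at least 67 senators and at least
290 representatives (veto override). -/
def usWinning (S : Finset USPlayer) : Prop :=
  (USPlayer.pres ∈ S ∧ 218 ≤ numRep S ∧
    (51 ≤ numSen S ∨ (USPlayer.vp ∈ S ∧ 50 ≤ numSen S))) ∨
  (67 ≤ numSen S ∧ 290 ≤ numRep S)

/-- The number of coalitions of size `k` in which player `i` is critical in the US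
legislative game. -/
noncomputable def usCrit (i : USPlayer) (k : ℕ) : ℕ :=
  Set.ncard {S : Finset USPlayer |
    S.card = k ∧ i ∈ S ∧ usWinning S ∧ ¬ usWinning (S.erase i)}

/-!
Let `σ` be a senator. If `σ` is critical in a coalition containing the president, the
president is critical there too. If `σ` is critical in a coalition without the president,
that coalition is a veto override with exactly 67 senators; replacing `σ` by the president
gives a coalition of the same size with 66 senators in which the president is critical and
`σ` is absent. This injects the coalitions where `σ` is critical into those where the
president is. The injection misses any coalition `W` where the president is critical and
`σ ∈ W ↔ 52 ≤ numSen W`, and since senators are interchangeable, such a `W` of size `k`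
exists as soon as the president is critical in some coalition of size `k`.
-/

open Finset USPlayer

section Counting

variable (S : Finset USPlayer)

lemma numSen_erase_of_isSen_eq_false {p : USPlayer} (hp : p.isSen = false) :
    numSen (S.erase p) = numSen S := by
  rw [numSen, filter_erase, erase_eq_of_notMem (by simp [hp]), numSen]

lemma numRep_erase_of_isRep_eq_false {p : USPlayer} (hp : p.isRep = false) :
    numRep (S.erase p) = numRep S := by
  rw [numRep, filter_erase, erase_eq_of_notMem (by simp [hp]), numRep]

lemma numSen_insert_of_isSen_eq_false {p : USPlayer} (hp : p.isSen = false) :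
    numSen (insert p S) = numSen S := by
  simp [numSen, filter_insert, hp]

lemma numRep_insert_of_isRep_eq_false {p : USPlayer} (hp : p.isRep = false) :
    numRep (insert p S) = numRep S := by
  simp [numRep, filter_insert, hp]

lemma numSen_erase_sen {σ : Fin 100} (h : sen σ ∈ S) :
    numSen (S.erase (sen σ)) = numSen S - 1 := by
  rw [numSen, filter_erase,
    card_erase_of_mem (mem_filter.2 ⟨h, rfl⟩ : sen σ ∈ S.filter (·.isSen)), numSen]

lemma numSen_map {e : USPlayer ≃ USPlayer} (he : ∀ p, (e p).isSen = p.isSen) :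
    numSen (S.map e.toEmbedding) = numSen S := by
  simp only [numSen, filter_map, card_map, Function.comp_def, Equiv.coe_toEmbedding, he]

lemma numRep_map {e : USPlayer ≃ USPlayer} (he : ∀ p, (e p).isRep = p.isRep) :
    numRep (S.map e.toEmbedding) = numRep S := by
  simp only [numRep, filter_map, card_map, Function.comp_def, Equiv.coe_toEmbedding, he]

lemma exists_sen_notMem (h : numSen S < 100) : ∃ t : Fin 100, sen t ∉ S := by
  by_contra! hall
  have hsub : univ.map ⟨sen, fun _ _ => sen.inj⟩ ⊆ S.filter (·.isSen) := by
    intro p hp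
    obtain ⟨t, -, rfl⟩ := mem_map.1 hp
    exact mem_filter.2 ⟨hall t, rfl⟩
  have := card_le_card hsub
  rw [card_map, card_univ, Fintype.card_fin] at this
  exact absurd h (not_lt.2 this)

lemma exists_sen_mem (h : 0 < numSen S) : ∃ t : Fin 100, sen t ∈ S := by
  obtain ⟨p, hp⟩ := card_pos.1 h
  obtain ⟨hpS, hp⟩ := mem_filter.1 hp
  cases p with
  | sen t => exact ⟨t, hpS⟩
  | _ => simp [isSen] at hp

end Counting

lemma isSen_swap_sen (a b : Fin 100) (p : USPlayer) :
    (Equiv.swap (sen a) (sen b) p).isSen = p.isSen := by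
  rw [Equiv.swap_apply_def]
  split_ifs <;> subst_vars <;> rfl

lemma isRep_swap_sen (a b : Fin 100) (p : USPlayer) :
    (Equiv.swap (sen a) (sen b) p).isRep = p.isRep := by
  rw [Equiv.swap_apply_def]
  split_ifs <;> subst_vars <;> rfl

def usCritical (i : USPlayer) (S : Finset USPlayer) : Prop :=
  i ∈ S ∧ usWinning S ∧ ¬ usWinning (S.erase i)

lemma usCrit_eq_ncard (i : USPlayer) (k : ℕ) :
    usCrit i k = {S : Finset USPlayer | S.card = k ∧ usCritical i S}.ncard := rfl

section Criticality

variable {S : Finset USPlayer}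

lemma usWinning_erase_pres :
    usWinning (S.erase pres) ↔ 67 ≤ numSen S ∧ 290 ≤ numRep S := by
  simp [usWinning, numSen_erase_of_isSen_eq_false S (p := pres) rfl,
    numRep_erase_of_isRep_eq_false S (p := pres) rfl]

lemma usCritical_pres_iff :
    usCritical pres S ↔ pres ∈ S ∧ 218 ≤ numRep S ∧
      (51 ≤ numSen S ∨ vp ∈ S ∧ 50 ≤ numSen S) ∧ ¬ (67 ≤ numSen S ∧ 290 ≤ numRep S) := by
  rw [usCritical, usWinning_erase_pres, usWinning]
  tauto

lemma not_usCritical_sen (σ : Fin 100) (hP : pres ∈ S) (hr : 218 ≤ numRep S)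
    (hs : 52 ≤ numSen S) : ¬ usCritical (sen σ) S := by
  rintro ⟨hσ, -, hlose⟩
  refine hlose (Or.inl ⟨mem_erase.2 ⟨nofun, hP⟩, ?_, Or.inl ?_⟩)
  · rw [numRep_erase_of_isRep_eq_false S (p := sen σ) rfl]; exact hr
  · rw [numSen_erase_sen S hσ]; omega

lemma usCritical_pres_of_usCritical_sen {σ : Fin 100} (h : usCritical (sen σ) S)
    (hP : pres ∈ S) : usCritical pres S := by
  have no_override : ¬ (67 ≤ numSen S ∧ 290 ≤ numRep S) := fun ⟨hs, hr⟩ =>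
    not_usCritical_sen σ hP (by omega) (by omega) h
  rcases h.2.1 with ⟨-, hr, hs⟩ | hwin
  · exact usCritical_pres_iff.2 ⟨hP, hr, hs, no_override⟩
  · exact absurd hwin no_override

lemma override_of_usCritical_sen {σ : Fin 100} (h : usCritical (sen σ) S) (hP : pres ∉ S) :
    numSen S = 67 ∧ 290 ≤ numRep S := by
  obtain ⟨hσ, hwin | ⟨hs, hr⟩, hlose⟩ := h
  · exact absurd hwin.1 hP
  refine ⟨le_antisymm (not_lt.1 fun hlt => hlose (Or.inr ⟨?_, ?_⟩)) hs, hr⟩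
  · rw [numSen_erase_sen S hσ]; omega
  · rw [numRep_erase_of_isRep_eq_false S (p := sen σ) rfl]; exact hr

lemma usCritical_pres_map {e : USPlayer ≃ USPlayer} (hsen : ∀ p, (e p).isSen = p.isSen)
    (hrep : ∀ p, (e p).isRep = p.isRep) (hpres : e pres = pres) (hvp : e vp = vp) :
    usCritical pres (S.map e.toEmbedding) ↔ usCritical pres S := by
  simp only [usCritical_pres_iff, numSen_map S hsen, numRep_map S hrep, mem_map_equiv,
    e.symm_apply_eq.2 hpres.symm, e.symm_apply_eq.2 hvp.symm]

end Criticality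

def presCoalition (σ : Fin 100) (S : Finset USPlayer) : Finset USPlayer :=
  if pres ∈ S then S else insert pres (S.erase (sen σ))

section PresCoalition

variable {σ : Fin 100} {S : Finset USPlayer}

lemma card_presCoalition (hσ : sen σ ∈ S) : (presCoalition σ S).card = S.card := by
  unfold presCoalition
  split_ifs with hP
  · rfl
  · rw [card_insert_of_notMem fun h => hP (mem_of_mem_erase h), card_erase_of_mem hσ]
    exact Nat.sub_add_cancel (card_pos.2 ⟨_, hσ⟩)

lemma numSen_presCoalition_of_pres_notMem (hσ : sen σ ∈ S) (hP : pres ∉ S) :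
    numSen (presCoalition σ S) = numSen S - 1 := by
  rw [presCoalition, if_neg hP, numSen_insert_of_isSen_eq_false _ rfl, numSen_erase_sen S hσ]

lemma usCritical_pres_presCoalition (h : usCritical (sen σ) S) :
    usCritical pres (presCoalition σ S) := by
  by_cases hP : pres ∈ S
  · rw [presCoalition, if_pos hP]
    exact usCritical_pres_of_usCritical_sen h hP
  · obtain ⟨hs, hr⟩ := override_of_usCritical_sen h hP
    have hs' := numSen_presCoalition_of_pres_notMem h.1 hP
    rw [presCoalition, if_neg hP] at hs' ⊢
    refine usCritical_pres_iff.2 ⟨mem_insert_self _ _, ?_, Or.inl (by omega), by omega⟩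
    rw [numRep_insert_of_isRep_eq_false _ rfl,
      numRep_erase_of_isRep_eq_false S (p := sen σ) rfl]
    omega

lemma sen_notMem_presCoalition (hP : pres ∉ S) : sen σ ∉ presCoalition σ S := by
  simp [presCoalition, hP]

lemma injOn_presCoalition : Set.InjOn (presCoalition σ) {S | sen σ ∈ S} := by
  intro S₁ (h₁ : sen σ ∈ S₁) S₂ (h₂ : sen σ ∈ S₂) heq
  by_cases hP₁ : pres ∈ S₁ <;> by_cases hP₂ : pres ∈ S₂
  · simpa [presCoalition, hP₁, hP₂] using heq
  · rw [show presCoalition σ S₁ = S₁ from if_pos hP₁] at heq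
    exact absurd (heq ▸ h₁) (sen_notMem_presCoalition hP₂)
  · rw [show presCoalition σ S₂ = S₂ from if_pos hP₂] at heq
    exact absurd (heq ▸ h₂) (sen_notMem_presCoalition hP₁)
  · simp only [presCoalition, if_neg hP₁, if_neg hP₂] at heq
    have herase := congrArg (·.erase pres) heq
    simp only [erase_insert fun h => hP₁ (mem_of_mem_erase h),
      erase_insert fun h => hP₂ (mem_of_mem_erase h)] at herase
    rw [← insert_erase h₁, herase, insert_erase h₂]

/-- With `σ`, such a `W` has too many senators for `σ` to be critical; without `σ`, too few
to have the 66 senators of a coalition where the president replaced `σ`. -/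
lemma presCoalition_ne (h : usCritical (sen σ) S) {W : Finset USPlayer}
    (hW : usCritical pres W) (hWσ : sen σ ∈ W ↔ 52 ≤ numSen W) : presCoalition σ S ≠ W := by
  rintro rfl
  by_cases hP : pres ∈ S
  · rw [presCoalition, if_pos hP] at hW hWσ
    obtain ⟨-, hr, -⟩ := usCritical_pres_iff.1 hW
    exact not_usCritical_sen σ hP hr (hWσ.1 h.1) h
  · have hs := numSen_presCoalition_of_pres_notMem h.1 hP
    have := (override_of_usCritical_sen h hP).1
    have := hWσ.not.1 (sen_notMem_presCoalition hP)
    omega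

end PresCoalition

lemma exists_usCritical_pres_sen_mem_iff {T : Finset USPlayer} (hT : usCritical pres T)
    (σ : Fin 100) : ∃ W : Finset USPlayer, W.card = T.card ∧ usCritical pres W ∧
      (sen σ ∈ W ↔ 52 ≤ numSen W) := by
  have ht : ∃ t : Fin 100, (sen t ∈ T ↔ 52 ≤ numSen T) := by
    by_cases hs : 52 ≤ numSen T
    · obtain ⟨t, ht⟩ := exists_sen_mem T (by omega)
      exact ⟨t, iff_of_true ht hs⟩
    · obtain ⟨t, ht⟩ := exists_sen_notMem T (by omega)
      exact ⟨t, iff_of_false ht hs⟩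
  obtain ⟨t, ht⟩ := ht
  set e := Equiv.swap (sen σ) (sen t)
  refine ⟨T.map e.toEmbedding, card_map _, ?_, ?_⟩
  · exact (usCritical_pres_map (isSen_swap_sen σ t) (isRep_swap_sen σ t)
      (Equiv.swap_apply_of_ne_of_ne nofun nofun) (Equiv.swap_apply_of_ne_of_ne nofun nofun)).2 hT
  · rw [mem_map_equiv, Equiv.symm_swap, Equiv.swap_apply_left, numSen_map T (isSen_swap_sen σ t)]
    exact ht

/-- Proposition 3 (c) of the paper: wherever the president's critical number is nonzero
it strictly exceeds that of any senator. -/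
theorem us_president_dominates_senator :
    ∀ k : ℕ, usCrit USPlayer.pres k ≠ 0 →
      ∀ s : Fin 100, usCrit USPlayer.pres k > usCrit (USPlayer.sen s) k := by
  intro k hk σ
  simp only [usCrit_eq_ncard] at hk ⊢
  set A := {S : Finset USPlayer | S.card = k ∧ usCritical (sen σ) S}
  set B := {S : Finset USPlayer | S.card = k ∧ usCritical pres S}
  have hmaps : Set.MapsTo (presCoalition σ) A B := fun S ⟨hSk, hS⟩ =>
    ⟨(card_presCoalition hS.1).trans hSk, usCritical_pres_presCoalition hS⟩
  have hinj : Set.InjOn (presCoalition σ) A := injOn_presCoalition.mono fun S hS => hS.2.1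
  obtain ⟨T, hTk, hT⟩ := Set.nonempty_of_ncard_ne_zero hk
  obtain ⟨W, hWk, hW, hWσ⟩ := exists_usCritical_pres_sen_mem_iff hT σ
  have hW_notMem : W ∉ presCoalition σ '' A := fun ⟨S, hS, hSW⟩ =>
    presCoalition_ne hS.2 hW hWσ hSW
  calc A.ncard = (presCoalition σ '' A).ncard := (hinj.ncard_image).symm
    _ < B.ncard := Set.ncard_lt_ncard
      ((Set.ssubset_iff_of_subset hmaps.image_subset).2 ⟨W, ⟨hWk.trans hTk, hW⟩, hW_notMem⟩)
      (Set.finite_of_ncard_ne_zero hk)
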